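/- arXiv:1207.3629 — 5 statements merged into one kernel-verified Lean document; each statement's English description precedes it below -/
import Mathlib

section
/- Let (M, m) be a quasi-arithmetic matroid satisfying axioms (4) and (5): ρ(A,B) ≥ 0 whenever A ⊆ B and rk(A)=rk(B), and ρ*(A,B) ≥ 0 whenever A ⊆ B and rk*(A)=rk*(B). Then (M,m) satisfies axiom (P): ρ(R,S) ≥ 0 for every molecule [R,S]. -/
/-!
If `m R ≠ 0`, axiom (A2) on every sub-molecule `[R, R ∪ F' ∪ T']` factors
`m(R) · ρ(R, R ∪ F ∪ T)` as `ρ(R, R ∪ F) · ρ(R, R ∪ T)`. The second factor is nonnegative by (4),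
because `[R, R ∪ T]` preserves rank; the first is `ρ*` of the corank-preserving interval
`[E \ (R ∪ F), E \ R]`, nonnegative by (5).

If `m R = 0`, then `m` vanishes on the whole molecule: adding an independent element only
multiplies `m` by (A1), and adding a dependent element cannot increase `m` by (4) applied to a
one-element interval. Hence `ρ(R, R ∪ F ∪ T) = 0`.
-/

/-- `[R, R ∪ F ∪ T]` is a molecule for the rank function `rk`. -/
def IsMoleculeWith {α : Type*} [DecidableEq α] (rk : Finset α → ℕ)
    (R F T : Finset α) : Prop :=
  Disjoint R F ∧ Disjoint R T ∧ Disjoint F T ∧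
  ∀ A : Finset α, R ⊆ A → A ⊆ R ∪ F ∪ T → rk A = rk R + (A ∩ F).card

/-- `ρ(R,S) = (-1)^{|T|} Σ_{A ∈ [R,S]} (-1)^{|S|-|A|} m(A)`, where `T` is the dependent
part of the molecule `[R,S]`. -/
def rho {α : Type*} [DecidableEq α] (m : Finset α → ℕ) (T R S : Finset α) : ℤ :=
  (-1) ^ T.card * ∑ A ∈ Finset.Icc R S, (-1) ^ (S.card - A.card) * (m A : ℤ)

open Finset

namespace Finset
variable {α : Type*} [DecidableEq α]

lemma sum_Icc_union_eq_sum_powerset {M : Type*} [AddCommMonoid M] {R D : Finset α}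
    (h : Disjoint R D) (g : Finset α → M) :
    ∑ A ∈ Icc R (R ∪ D), g A = ∑ D' ∈ D.powerset, g (R ∪ D') := by
  rw [Icc_eq_image_powerset subset_union_left, union_sdiff_cancel_left h, sum_image]
  intro D₁ h₁ D₂ h₂ heq
  rw [mem_coe, mem_powerset] at h₁ h₂
  simpa [union_sdiff_cancel_left (h.mono_right h₁), union_sdiff_cancel_left (h.mono_right h₂)]
    using congrArg (· \ R) heq

lemma sum_powerset_union_of_disjoint {M : Type*} [AddCommMonoid M] {F T : Finset α}
    (h : Disjoint F T) (g : Finset α → M) :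
    ∑ U ∈ (F ∪ T).powerset, g U = ∑ F' ∈ F.powerset, ∑ T' ∈ T.powerset, g (F' ∪ T') := by
  rw [powerset_union]
  change ∑ U ∈ image₂ (· ⊔ ·) _ _, g U = _
  rw [← image_uncurry_product, sum_image, sum_product]
  · rfl
  rintro ⟨F₁, T₁⟩ h₁ ⟨F₂, T₂⟩ h₂ heq
  obtain ⟨hF₁, hT₁⟩ : F₁ ⊆ F ∧ T₁ ⊆ T := by simpa using h₁
  obtain ⟨hF₂, hT₂⟩ : F₂ ⊆ F ∧ T₂ ⊆ T := by simpa using h₂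
  simp only [Function.uncurry_apply_pair, sup_eq_union] at heq
  have key : ∀ F' ⊆ F, ∀ T' ⊆ T, (F' ∪ T') ∩ F = F' ∧ (F' ∪ T') ∩ T = T' := fun F' hF' T' hT' =>
    ⟨by rw [union_inter_distrib_right, inter_eq_left.2 hF',
        disjoint_iff_inter_eq_empty.1 (h.symm.mono_left hT'), union_empty],
     by rw [union_inter_distrib_right, inter_eq_left.2 hT',
        disjoint_iff_inter_eq_empty.1 (h.mono_left hF'), empty_union]⟩
  have k₁ := key F₁ hF₁ T₁ hT₁
  have k₂ := key F₂ hF₂ T₂ hT₂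
  rw [heq] at k₁
  rw [Prod.mk.injEq, ← k₁.1, ← k₁.2, k₂.1, k₂.2]
  exact ⟨rfl, rfl⟩

end Finset

section Rho
variable {α : Type*} [DecidableEq α]

lemma neg_one_pow_sub_mul_neg_one_pow_sub {a b c : ℕ} (hab : a ≤ b) (hbc : b ≤ c) :
    (-1 : ℤ) ^ (c - a) * (-1) ^ (b - a) = (-1) ^ (c - b) := by
  rw [← pow_add, show c - a + (b - a) = c - b + 2 * (b - a) by omega, pow_add, pow_mul]
  norm_num

lemma rho_union_eq_sum_powerset (m : Finset α → ℕ) (T : Finset α) {R D : Finset α}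
    (h : Disjoint R D) :
    rho m T R (R ∪ D) =
      (-1) ^ T.card * ∑ D' ∈ D.powerset, (-1) ^ (D.card - D'.card) * (m (R ∪ D') : ℤ) := by
  rw [rho, sum_Icc_union_eq_sum_powerset h]
  congr 1
  refine sum_congr rfl fun D' hD' => ?_
  rw [card_union_of_disjoint h, card_union_of_disjoint (h.mono_right (mem_powerset.1 hD')),
    Nat.add_sub_add_left]

lemma rho_insert (m : Finset α → ℕ) {X : Finset α} {t : α} (ht : t ∉ X) :
    rho m {t} X (insert t X) = m X - m (insert t X) := by
  rw [insert_eq, union_comm, rho_union_eq_sum_powerset m {t} (disjoint_singleton_right.2 ht),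
    ← insert_empty, sum_powerset_insert (notMem_empty t)]
  simp [sub_eq_neg_add]

lemma rho_compl [Fintype α] (m : Finset α → ℕ) {R S : Finset α} (h : R ⊆ S) :
    rho (fun C => m Cᶜ) (S \ R) Sᶜ Rᶜ = rho m ∅ R S := by
  have hsum : ∑ C ∈ Icc Sᶜ Rᶜ, (-1 : ℤ) ^ (Rᶜ.card - C.card) * (m Cᶜ : ℤ) =
      ∑ A ∈ Icc R S, (-1) ^ (A.card - R.card) * (m A : ℤ) := by
    refine sum_nbij' (·ᶜ) (·ᶜ) ?_ ?_ (fun C _ => compl_compl C) (fun A _ => compl_compl A) ?_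
    · intro C hC
      rw [mem_Icc] at hC ⊢
      exact ⟨subset_compl_comm.1 hC.2, compl_le_iff_compl_le.1 hC.1⟩
    · intro A hA
      rw [mem_Icc] at hA ⊢
      exact ⟨compl_subset_compl.2 hA.2, compl_subset_compl.2 hA.1⟩
    · intro C _
      rw [card_compl, card_compl, Nat.sub_right_comm]
  rw [rho, rho, hsum, card_empty, pow_zero, one_mul, mul_sum, card_sdiff_of_subset h]
  refine sum_congr rfl fun A hA => ?_
  obtain ⟨hRA, hAS⟩ := mem_Icc.1 hA
  rw [← mul_assoc,
    neg_one_pow_sub_mul_neg_one_pow_sub (card_le_card hRA) (card_le_card hAS)]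

lemma mul_rho_eq_mul_rho (m : Finset α → ℕ) {R F T : Finset α}
    (hRF : Disjoint R F) (hRT : Disjoint R T) (hFT : Disjoint F T)
    (hm : ∀ F' ⊆ F, ∀ T' ⊆ T, m R * m (R ∪ F' ∪ T') = m (R ∪ F') * m (R ∪ T')) :
    m R * rho m T R (R ∪ F ∪ T) = rho m ∅ R (R ∪ F) * rho m T R (R ∪ T) := by
  have hterm : ∀ F' ∈ F.powerset, ∀ T' ∈ T.powerset,
      m R * ((-1) ^ ((F ∪ T).card - (F' ∪ T').card) * (m (R ∪ (F' ∪ T')) : ℤ)) =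
        (-1) ^ (F.card - F'.card) * (m (R ∪ F') : ℤ) *
          ((-1) ^ (T.card - T'.card) * (m (R ∪ T') : ℤ)) := by
    intro F' hF' T' hT'
    rw [mem_powerset] at hF' hT'
    have hexp : (F ∪ T).card - (F' ∪ T').card = (F.card - F'.card) + (T.card - T'.card) := by
      rw [card_union_of_disjoint hFT, card_union_of_disjoint (hFT.mono hF' hT')]
      have := card_le_card hF'
      have := card_le_card hT'
      omega
    have hmul : (m R * m (R ∪ F' ∪ T') : ℤ) = m (R ∪ F') * m (R ∪ T') := by
      exact_mod_cast hm F' hF' T' hT'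
    rw [hexp, pow_add, ← union_assoc]
    linear_combination (-1 : ℤ) ^ (F.card - F'.card) * (-1) ^ (T.card - T'.card) * hmul
  have hsum : m R * ∑ F' ∈ F.powerset, ∑ T' ∈ T.powerset,
        (-1) ^ ((F ∪ T).card - (F' ∪ T').card) * (m (R ∪ (F' ∪ T')) : ℤ) =
      (∑ F' ∈ F.powerset, (-1) ^ (F.card - F'.card) * (m (R ∪ F') : ℤ)) *
        ∑ T' ∈ T.powerset, (-1) ^ (T.card - T'.card) * (m (R ∪ T') : ℤ) := by
    rw [mul_sum, sum_mul_sum]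
    refine sum_congr rfl fun F' hF' => ?_
    rw [mul_sum]
    exact sum_congr rfl fun T' hT' => hterm F' hF' T' hT'
  rw [union_assoc, rho_union_eq_sum_powerset m T (disjoint_union_right.2 ⟨hRF, hRT⟩),
    rho_union_eq_sum_powerset m ∅ hRF, rho_union_eq_sum_powerset m T hRT,
    sum_powerset_union_of_disjoint hFT, mul_left_comm, hsum, card_empty, pow_zero, one_mul]
  ring

end Rho

lemma mult_insert_le_of_rk_eq {α : Type*} [DecidableEq α] {rk m : Finset α → ℕ}
    (h4 : ∀ A B : Finset α, A ⊆ B → rk A = rk B → 0 ≤ rho m (B \ A) A B)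
    {X : Finset α} {e : α} (he : e ∉ X) (hrk : rk (insert e X) = rk X) :
    m (insert e X) ≤ m X := by
  have := h4 X (insert e X) (subset_insert e X) hrk.symm
  rw [insert_sdiff_cancel he, rho_insert m he, sub_nonneg] at this
  exact_mod_cast this

namespace IsMoleculeWith
variable {α : Type*} [DecidableEq α] {rk : Finset α → ℕ} {R F T : Finset α}

lemma mono (h : IsMoleculeWith rk R F T) {F' T' : Finset α} (hF : F' ⊆ F) (hT : T' ⊆ T) :
    IsMoleculeWith rk R F' T' := by
  obtain ⟨hRF, hRT, hFT, hrk⟩ := h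
  refine ⟨hRF.mono_right hF, hRT.mono_right hT, hFT.mono hF hT, fun A hRA hA => ?_⟩
  have hAF : A ∩ F = A ∩ F' := by
    have hRF' := disjoint_left.1 hRF
    have hFT' := disjoint_left.1 hFT
    ext x
    simp only [mem_inter]
    grind
  rw [hrk A hRA (hA.trans (union_subset_union (union_subset_union_right hF) hT)), hAF]

lemma rk_union (h : IsMoleculeWith rk R F T) {D : Finset α} (hD : D ⊆ F ∪ T) :
    rk (R ∪ D) = rk R + (D ∩ F).card := by
  rw [h.2.2.2 (R ∪ D) subset_union_left (union_assoc R F T ▸ union_subset_union_right hD),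
    union_inter_distrib_right, disjoint_iff_inter_eq_empty.1 h.1, empty_union]

lemma mult_eq_zero_of_mem_Icc (h : IsMoleculeWith rk R F T) {m : Finset α → ℕ}
    (hA1 : ∀ (A : Finset α) (e : α), e ∉ A → rk (insert e A) ≠ rk A → m A ∣ m (insert e A))
    (h4 : ∀ A B : Finset α, A ⊆ B → rk A = rk B → 0 ≤ rho m (B \ A) A B)
    (hmR : m R = 0) {A : Finset α} (hA : A ∈ Icc R (R ∪ F ∪ T)) : m A = 0 := by
  obtain ⟨hRA, hAS⟩ := mem_Icc.1 hA
  suffices ∀ D ⊆ F ∪ T, m (R ∪ D) = 0 by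
    rw [← union_sdiff_of_subset hRA]
    exact this _ (sdiff_le_iff.2 (hAS.trans (union_assoc R F T).subset))
  intro D hD
  induction D using Finset.induction_on with
  | empty => rwa [union_empty]
  | insert e D heD ih =>
    have hD' : D ⊆ F ∪ T := (subset_insert e D).trans hD
    have he : e ∈ F ∪ T := hD (mem_insert_self e D)
    have heRD : e ∉ R ∪ D := by
      rw [mem_union, not_or]
      exact ⟨disjoint_right.1 (disjoint_union_right.2 ⟨h.1, h.2.1⟩) he, heD⟩
    have hrk := h.rk_union hD
    rw [union_insert] at hrk ⊢
    rcases mem_union.1 he with heF | heT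
    · rw [insert_inter_of_mem heF, card_insert_of_notMem fun he' => heD (mem_inter.1 he').1,
        ← add_assoc, ← h.rk_union hD'] at hrk
      exact zero_dvd_iff.1 (ih hD' ▸ hA1 _ e heRD (by omega))
    · rw [insert_inter_of_notMem (disjoint_right.1 h.2.2.1 heT), ← h.rk_union hD'] at hrk
      exact Nat.eq_zero_of_le_zero (ih hD' ▸ mult_insert_le_of_rk_eq h4 heRD hrk)

lemma rho_dep_nonneg (h : IsMoleculeWith rk R F T) {m : Finset α → ℕ}
    (h4 : ∀ A B : Finset α, A ⊆ B → rk A = rk B → 0 ≤ rho m (B \ A) A B) :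
    0 ≤ rho m T R (R ∪ T) := by
  have hrk : rk (R ∪ T) = rk R := by
    simpa [disjoint_iff_inter_eq_empty.1 h.2.2.1.symm] using h.rk_union subset_union_right
  simpa [union_sdiff_cancel_left h.2.1] using h4 R (R ∪ T) subset_union_left hrk.symm

lemma rho_indep_nonneg [Fintype α] (h : IsMoleculeWith rk R F T) {m : Finset α → ℕ}
    (h5 : ∀ A B : Finset α, A ⊆ B → A.card + rk (univ \ A) = B.card + rk (univ \ B) →
      0 ≤ rho (fun C => m (univ \ C)) (B \ A) A B) :
    0 ≤ rho m ∅ R (R ∪ F) := by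
  simp only [← compl_eq_univ_sdiff] at h5
  have hrk : rk (R ∪ F) = rk R + F.card := by simpa using h.rk_union subset_union_left
  have hcard := card_le_univ (R ∪ F)
  rw [card_union_of_disjoint h.1] at hcard
  have hcorank : (R ∪ F)ᶜ.card + rk (R ∪ F)ᶜᶜ = Rᶜ.card + rk Rᶜᶜ := by
    rw [compl_compl, compl_compl, card_compl, card_compl, hrk, card_union_of_disjoint h.1]
    omega
  have := h5 _ _ (compl_subset_compl.2 subset_union_left) hcorank
  rwa [compl_sdiff_compl, rho_compl m subset_union_left] at this

end IsMoleculeWith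

theorem axiom45_imp_axiomP_general {α : Type*} [Fintype α] [DecidableEq α]
    (rk : Finset α → ℕ) (m : Finset α → ℕ)
    -- (A1): divisibility
    (hA1 : ∀ (A : Finset α) (e : α), e ∉ A →
      (rk (insert e A) = rk A → m (insert e A) ∣ m A) ∧
      (rk (insert e A) ≠ rk A → m A ∣ m (insert e A)))
    -- (A2): multiplicativity on molecules
    (hA2 : ∀ R F T : Finset α, IsMoleculeWith rk R F T →
      m R * m (R ∪ F ∪ T) = m (R ∪ F) * m (R ∪ T))
    -- axiom (4): positivity on rank-preserving intervals
    (h4 : ∀ A B : Finset α, A ⊆ B → rk A = rk B → 0 ≤ rho m (B \ A) A B)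
    -- axiom (5): positivity on corank-preserving intervals (i.e. for the dual)
    (h5 : ∀ A B : Finset α, A ⊆ B →
      A.card + rk (Finset.univ \ A) = B.card + rk (Finset.univ \ B) →
      0 ≤ rho (fun C => m (Finset.univ \ C)) (B \ A) A B) :
    -- axiom (P)
    ∀ R F T : Finset α, IsMoleculeWith rk R F T → 0 ≤ rho m T R (R ∪ F ∪ T) := by
  intro R F T hmol
  have ⟨hRF, hRT, hFT, _⟩ := hmol
  by_cases hmR : m R = 0
  · rw [rho, sum_eq_zero fun A hA => ?_, mul_zero]
    rw [hmol.mult_eq_zero_of_mem_Icc (fun A e he => (hA1 A e he).2) h4 hmR hA, Nat.cast_zero,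
      mul_zero]
  · have hP := hmol.rho_indep_nonneg h5
    have hQ := hmol.rho_dep_nonneg h4
    have hprod := mul_rho_eq_mul_rho m hRF hRT hFT fun F' hF' T' hT' =>
      hA2 R F' T' (hmol.mono hF' hT')
    exact nonneg_of_mul_nonneg_right (hprod ▸ mul_nonneg hP hQ) (by positivity)

/-- a quasi-arithmetic matroid (axioms (A1), (A2)) satisfying axioms (4) and
(5) of D'Adderio–Moci satisfies the positivity axiom (P): `ρ(R,S) ≥ 0` for every molecule
`[R,S]`. -/
theorem axiom45_imp_axiomP {α : Type*} [Fintype α] [DecidableEq α]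
    (rk : Finset α → ℕ) (m : Finset α → ℕ)
    (hR0 : rk ∅ = 0)
    (hR1 : ∀ A B : Finset α, A ⊆ B → rk A ≤ rk B)
    (hR2 : ∀ A B : Finset α, rk (A ∪ B) + rk (A ∩ B) ≤ rk A + rk B)
    (hR3 : ∀ (A : Finset α) (e : α), rk (insert e A) ≤ rk A + 1)
    -- (A1): divisibility
    (hA1 : ∀ (A : Finset α) (e : α), e ∉ A →
      (rk (insert e A) = rk A → m (insert e A) ∣ m A) ∧
      (rk (insert e A) ≠ rk A → m A ∣ m (insert e A)))
    -- (A2): multiplicativity on molecules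
    (hA2 : ∀ R F T : Finset α, IsMoleculeWith rk R F T →
      m R * m (R ∪ F ∪ T) = m (R ∪ F) * m (R ∪ T))
    -- axiom (4): positivity on rank-preserving intervals
    (h4 : ∀ A B : Finset α, A ⊆ B → rk A = rk B → 0 ≤ rho m (B \ A) A B)
    -- axiom (5): positivity on corank-preserving intervals (i.e. for the dual)
    (h5 : ∀ A B : Finset α, A ⊆ B →
      A.card + rk (Finset.univ \ A) = B.card + rk (Finset.univ \ B) →
      0 ≤ rho (fun C => m (Finset.univ \ C)) (B \ A) A B) :
    -- axiom (P)
    ∀ R F T : Finset α, IsMoleculeWith rk R F T → 0 ≤ rho m T R (R ∪ F ∪ T) :=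
  axiom45_imp_axiomP_general rk m hA1 hA2 h4 h5
end

section
/- Deletion-contraction for the multivariate arithmetic Tutte polynomial: for an arithmetic matroid A on E and e ∈ E, Z_A(q,v) = Z_{A∖e}(q,v) + v_e · Z_{A/e}(q,v) if e is a loop (rk({e})=0), and Z_A(q,v) = Z_{A∖e}(q,v) + (v_e/q) · Z_{A/e}(q,v) otherwise, where Z_A(q,v) := Σ_{A⊆E} m(A) q^{-rk(A)} Π_{e∈A} v_e. -/
/-- The axioms of an arithmetic matroid `(rk, m)` on the finite ground set `α`. -/
def IsArithmeticMatroid {α : Type*} [Fintype α] [DecidableEq α]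
    (rk : Finset α → ℕ) (m : Finset α → ℕ) : Prop :=
  (rk ∅ = 0) ∧
  (∀ A B : Finset α, A ⊆ B → rk A ≤ rk B) ∧
  (∀ A B : Finset α, rk (A ∪ B) + rk (A ∩ B) ≤ rk A + rk B) ∧
  (∀ (A : Finset α) (e : α), rk (insert e A) ≤ rk A + 1) ∧
  (∀ (A : Finset α) (e : α), e ∉ A →
    (rk (insert e A) = rk A → m (insert e A) ∣ m A) ∧
    (rk (insert e A) ≠ rk A → m A ∣ m (insert e A))) ∧
  (∀ R F T : Finset α, IsMoleculeWith rk R F T →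
    m R * m (R ∪ F ∪ T) = m (R ∪ F) * m (R ∪ T)) ∧
  (∀ R F T : Finset α, IsMoleculeWith rk R F T → 0 ≤ rho m T R (R ∪ F ∪ T))

open Finset

section Tutte

variable {α K : Type*} [DecidableEq α] [Field K]

/-- `Z(q, v)` of `(rk, m)` restricted to the ground set `E`. -/
def multivariateTutte (rk m : Finset α → ℕ) (q : K) (v : α → K) (E : Finset α) : K :=
  ∑ A ∈ E.powerset, (m A : K) * q ^ (-(rk A : ℤ)) * ∏ b ∈ A, v b

/-- In terms of `q⁻¹` this is `pow_add`. -/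
theorem zpow_neg_natCast_eq_mul_of_le (q : K) {k n : ℕ} (hkn : k ≤ n) :
    q ^ (-(n : ℤ)) = q ^ (-(k : ℤ)) * q ^ (-((n - k : ℕ) : ℤ)) := by
  simp only [zpow_neg, zpow_natCast, ← inv_pow]
  rw [← pow_add, Nat.add_sub_cancel' hkn]

theorem multivariateTutte_insert (rk m : Finset α → ℕ) (q : K) (v : α → K) {e : α}
    {E : Finset α} (he : e ∉ E) (hrk : ∀ A ⊆ E, rk {e} ≤ rk (insert e A)) :
    multivariateTutte rk m q v (insert e E) =
      multivariateTutte rk m q v E +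
        v e * q ^ (-(rk {e} : ℤ)) *
          multivariateTutte (fun A => rk (insert e A) - rk {e}) (fun A => m (insert e A)) q v E := by
  rw [multivariateTutte, sum_powerset_insert he, multivariateTutte, multivariateTutte, mul_sum]
  congr 1
  refine sum_congr rfl fun A hA => ?_
  have heA : e ∉ A := fun h => he (mem_powerset.mp hA h)
  rw [prod_insert heA, zpow_neg_natCast_eq_mul_of_le q (hrk A (mem_powerset.mp hA))]
  ring

end Tutte

namespace IsArithmeticMatroid

variable {α : Type*} [Fintype α] [DecidableEq α] {rk m : Finset α → ℕ}

theorem rk_singleton_le_one (h : IsArithmeticMatroid rk m) (e : α) : rk {e} ≤ 1 := by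
  simpa [h.1] using h.2.2.2.1 ∅ e

theorem rk_singleton_le_rk_insert (h : IsArithmeticMatroid rk m) (e : α) (A : Finset α) :
    rk {e} ≤ rk (insert e A) :=
  h.2.1 _ _ (singleton_subset_iff.mpr (mem_insert_self e A))

end IsArithmeticMatroid

theorem deletion_contraction_general {α : Type*} [Fintype α] [DecidableEq α]
    (rk : Finset α → ℕ) (m : Finset α → ℕ)
    (h : IsArithmeticMatroid rk m)
    (e : α) (q : ℚ) (v : α → ℚ) :
    (rk {e} = 0 →
      ∑ A : Finset α, (m A : ℚ) * q ^ (-(rk A : ℤ)) * ∏ b ∈ A, v b =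
        (∑ A ∈ (Finset.univ.erase e).powerset,
            (m A : ℚ) * q ^ (-(rk A : ℤ)) * ∏ b ∈ A, v b) +
        v e * ∑ A ∈ (Finset.univ.erase e).powerset,
            (m (insert e A) : ℚ) * q ^ (-((rk (insert e A) - rk {e} : ℕ) : ℤ)) *
              ∏ b ∈ A, v b) ∧
    (rk {e} ≠ 0 →
      ∑ A : Finset α, (m A : ℚ) * q ^ (-(rk A : ℤ)) * ∏ b ∈ A, v b =
        (∑ A ∈ (Finset.univ.erase e).powerset,
            (m A : ℚ) * q ^ (-(rk A : ℤ)) * ∏ b ∈ A, v b) +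
        (v e / q) * ∑ A ∈ (Finset.univ.erase e).powerset,
            (m (insert e A) : ℚ) * q ^ (-((rk (insert e A) - rk {e} : ℕ) : ℤ)) *
              ∏ b ∈ A, v b) := by
  have hZ := multivariateTutte_insert rk m q v (notMem_erase e univ)
    fun A _ => h.rk_singleton_le_rk_insert e A
  simp only [insert_erase (mem_univ e), multivariateTutte, powerset_univ] at hZ
  refine ⟨fun hloop => ?_, fun hcoloop => ?_⟩
  · simpa [hloop] using hZ
  · have hrk : rk {e} = 1 := by have := h.rk_singleton_le_one e; omega
    simpa [hrk, div_eq_mul_inv] using hZ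

/-- deletion–contraction for the multivariate arithmetic Tutte polynomial
`Z(q,v) = Σ_{A⊆E} m(A) q^{-rk(A)} Π_{e∈A} v_e`.  The deletion by `e` keeps `rk` and `m`;
the contraction has rank `A ↦ rk(A∪{e}) - rk({e})` and multiplicity `A ↦ m(A∪{e})`. -/
theorem deletion_contraction {α : Type*} [Fintype α] [DecidableEq α]
    (rk : Finset α → ℕ) (m : Finset α → ℕ)
    (h : IsArithmeticMatroid rk m)
    (e : α) (q : ℚ) (hq : q ≠ 0) (v : α → ℚ) :
    (rk {e} = 0 →
      ∑ A : Finset α, (m A : ℚ) * q ^ (-(rk A : ℤ)) * ∏ b ∈ A, v b =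
        (∑ A ∈ (Finset.univ.erase e).powerset,
            (m A : ℚ) * q ^ (-(rk A : ℤ)) * ∏ b ∈ A, v b) +
        v e * ∑ A ∈ (Finset.univ.erase e).powerset,
            (m (insert e A) : ℚ) * q ^ (-((rk (insert e A) - rk {e} : ℕ) : ℤ)) *
              ∏ b ∈ A, v b) ∧
    (rk {e} ≠ 0 →
      ∑ A : Finset α, (m A : ℚ) * q ^ (-(rk A : ℤ)) * ∏ b ∈ A, v b =
        (∑ A ∈ (Finset.univ.erase e).powerset,
            (m A : ℚ) * q ^ (-(rk A : ℤ)) * ∏ b ∈ A, v b) +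
        (v e / q) * ∑ A ∈ (Finset.univ.erase e).powerset,
            (m (insert e A) : ℚ) * q ^ (-((rk (insert e A) - rk {e} : ℕ) : ℤ)) *
              ∏ b ∈ A, v b) :=
  deletion_contraction_general rk m h e q v
end

section
/- Crapo decomposition of the Boolean lattice: for a matroid M on a totally ordered finite ground set E with set of bases B, the power set 2^E is the disjoint union over B ∈ B of the intervals [B∖I(B), B∪E(B)], and each such interval is a molecule with independent part F = I(B) and dependent part T = E(B). -/
/-- `B` is a basis of the matroid with rank function `rk`. -/
def IsBasis {α : Type*} [Fintype α] [DecidableEq α] (rk : Finset α → ℕ)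
    (B : Finset α) : Prop :=
  rk B = B.card ∧ rk B = rk Finset.univ

/-- The set `E(B)` of externally active elements of a basis `B`: elements `e ∉ B`
depending on the elements of `B` following `e` in the order. -/
def extAct {α : Type*} [Fintype α] [LinearOrder α] (rk : Finset α → ℕ)
    (B : Finset α) : Finset α :=
  (Finset.univ \ B).filter
    (fun e => rk (insert e (B.filter (fun b => e < b))) = rk (B.filter (fun b => e < b)))

-- The set `I(B)` of internally active elements of a basis `B`: elements `e ∈ B` such
-- that there is no `f` preceding `e` with `(B∖{e})∪{f}` a basis.
open scoped Classical in
noncomputable def intAct {α : Type*} [Fintype α] [LinearOrder α] (rk : Finset α → ℕ)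
    (B : Finset α) : Finset α :=
  B.filter (fun e => ∀ f : α, f < e → ¬ IsBasis rk (insert f (B.erase e)))

/-!
Weight the elements so that those of `A` outweigh the others, larger elements of `A` weigh more,
and smaller elements outside `A` weigh more, and let `B` be a basis of maximal weight. Maximality
says that no exchange `B - b + f` with `f` heavier than `b` is a basis; for `b ∈ B \ A` this makes
`b` internally active, and for `e ∈ A \ B` it confines the fundamental circuit of `e` to elements
above `e`, so `e` is externally active. Uniqueness comes from looking at the largest element of
the symmetric difference of two candidate bases. In the interval of `B`, every externally active
element is spanned by `B` minus any set of internally active elements, so the rank of a set in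
the interval is the size of its intersection with `B`.
-/

open Finset

section Rank

variable {α : Type*} [DecidableEq α] {rk : Finset α → ℕ}
  (hR0 : rk ∅ = 0)
  (hR1 : ∀ A B : Finset α, A ⊆ B → rk A ≤ rk B)
  (hR2 : ∀ A B : Finset α, rk (A ∪ B) + rk (A ∩ B) ≤ rk A + rk B)
  (hR3 : ∀ (A : Finset α) (e : α), rk (insert e A) ≤ rk A + 1)

include hR1 hR2 in
theorem rk_insert_eq_of_subset {S T : Finset α} {e : α}
    (h : rk (insert e S) = rk S) (hST : S ⊆ T) : rk (insert e T) = rk T := by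
  have hsub := hR2 (insert e S) T
  rw [insert_union, union_eq_right.2 hST, h] at hsub
  have := hR1 S (insert e S ∩ T) (subset_inter (subset_insert e S) hST)
  have := hR1 T (insert e T) (subset_insert e T)
  omega

include hR1 hR2 in
theorem rk_union_eq_of_forall_rk_insert_eq {S X : Finset α}
    (h : ∀ e ∈ X, rk (insert e S) = rk S) : rk (S ∪ X) = rk S := by
  induction X using Finset.induction with
  | empty => simp
  | insert a X _ ih =>
    rw [union_insert, rk_insert_eq_of_subset hR1 hR2 (h a (mem_insert_self a X))
      subset_union_left, ih fun e he => h e (mem_insert_of_mem he)]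

include hR1 hR2 in
theorem exists_rk_insert_ne_of_rk_lt {S T : Finset α} (h : rk S < rk T) :
    ∃ f ∈ T, rk (insert f S) ≠ rk S := by
  by_contra! hT
  have := rk_union_eq_of_forall_rk_insert_eq hR1 hR2 hT
  have := hR1 T (S ∪ T) subset_union_right
  omega

include hR1 hR3 in
theorem rk_insert_eq_add_one_of_ne {S : Finset α} {e : α} (h : rk (insert e S) ≠ rk S) :
    rk (insert e S) = rk S + 1 := by
  have := hR1 S (insert e S) (subset_insert e S)
  have := hR3 S e
  omega

include hR0 hR3 in
theorem rk_le_card (A : Finset α) : rk A ≤ A.card := by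
  induction A using Finset.induction with
  | empty => simp [hR0]
  | insert a s ha ih =>
    rw [card_insert_of_notMem ha]
    exact (hR3 s a).trans (by omega)

include hR3 in
theorem rk_union_le_add_card (S X : Finset α) : rk (S ∪ X) ≤ rk S + X.card := by
  induction X using Finset.induction with
  | empty => simp
  | insert a X ha ih =>
    rw [union_insert, card_insert_of_notMem ha]
    exact (hR3 _ a).trans (by omega)

include hR0 hR3 in
theorem rk_eq_card_of_subset {B S : Finset α} (hB : rk B = B.card) (hSB : S ⊆ B) :
    rk S = S.card := by
  have := rk_union_le_add_card hR3 S (B \ S)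
  rw [union_sdiff_of_subset hSB, card_sdiff_of_subset hSB] at this
  have := card_le_card hSB
  have := rk_le_card hR0 hR3 S
  omega

end Rank

section Basis

variable {α : Type*} [Fintype α] [DecidableEq α] {rk : Finset α → ℕ}
  (hR0 : rk ∅ = 0)
  (hR1 : ∀ A B : Finset α, A ⊆ B → rk A ≤ rk B)
  (hR2 : ∀ A B : Finset α, rk (A ∪ B) + rk (A ∩ B) ≤ rk A + rk B)
  (hR3 : ∀ (A : Finset α) (e : α), rk (insert e A) ≤ rk A + 1)

include hR1 in
theorem IsBasis.rk_insert {B : Finset α} (hB : IsBasis rk B) (e : α) :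
    rk (insert e B) = rk B := by
  have := hR1 B (insert e B) (subset_insert e B)
  have := hR1 (insert e B) univ (subset_univ _)
  rw [← hB.2] at this
  omega

include hR0 hR3 in
theorem IsBasis.rk_erase {B : Finset α} (hB : IsBasis rk B) {b : α} (hb : b ∈ B) :
    rk (B.erase b) = B.card - 1 := by
  rw [rk_eq_card_of_subset hR0 hR3 hB.1 (erase_subset b B), card_erase_of_mem hb]

include hR0 hR1 hR3 in
theorem IsBasis.isBasis_insert_erase_iff {B : Finset α} (hB : IsBasis rk B) {b : α}
    (hb : b ∈ B) (e : α) :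
    IsBasis rk (insert e (B.erase b)) ↔ rk (insert e (B.erase b)) ≠ rk (B.erase b) := by
  have herase := hB.rk_erase hR0 hR3 hb
  have hpos : 0 < B.card := card_pos.2 ⟨b, hb⟩
  constructor
  · rintro ⟨-, h⟩
    rw [h, ← hB.2, hB.1]
    omega
  · intro h
    have hrk := rk_insert_eq_add_one_of_ne hR1 hR3 h
    have := rk_le_card hR0 hR3 (insert e (B.erase b))
    have := card_insert_le e (B.erase b)
    rw [card_erase_of_mem hb] at this
    exact ⟨by omega, by rw [← hB.2, hB.1]; omega⟩

include hR0 hR1 hR2 hR3 in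
theorem IsBasis.isBasis_insert_erase_of_rk_insert {B T : Finset α} (hB : IsBasis rk B)
    (hTB : T ⊆ B) {b e : α} (hb : b ∈ B) (hbT : b ∉ T) (hT : rk (insert e T) ≠ rk T)
    (hTb : rk (insert e (insert b T)) = rk (insert b T)) :
    IsBasis rk (insert e (B.erase b)) := by
  rw [hB.isBasis_insert_erase_iff hR0 hR1 hR3 hb]
  intro hspan
  have hb_span : rk (insert b (insert e T)) = rk (insert e T) := by
    have := hR3 T b
    have := hR1 (insert e T) (insert b (insert e T)) (subset_insert b _)
    rw [insert_comm] at this ⊢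
    have := rk_insert_eq_add_one_of_ne hR1 hR3 hT
    omega
  have hTe : insert e T ⊆ insert e (B.erase b) :=
    insert_subset_insert e fun x hx => mem_erase.2 ⟨fun h => hbT (h ▸ hx), hTB hx⟩
  have := rk_insert_eq_of_subset hR1 hR2 hb_span hTe
  have := hR1 B _ ((insert_erase hb).symm.subset.trans
    (insert_subset_insert b (subset_insert e (B.erase b))))
  have := hB.rk_erase hR0 hR3 hb
  have := card_pos.2 ⟨b, hb⟩
  rw [hB.1] at *
  omega

include hR0 hR1 hR2 hR3 in
/-- The fundamental circuit of `e` in `B` consists of `e` and the `b` for which `B - b + e` is a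
basis; any subset of `B` containing the latter spans `e`. -/
theorem IsBasis.rk_insert_eq_of_forall_not_isBasis {B S : Finset α} (hB : IsBasis rk B)
    (hSB : S ⊆ B) {e : α} (h : ∀ b ∈ B \ S, ¬ IsBasis rk (insert e (B.erase b))) :
    rk (insert e S) = rk S := by
  suffices key : ∀ D ⊆ B, (∀ b ∈ D, ¬ IsBasis rk (insert e (B.erase b))) →
      rk (insert e (B \ D)) = rk (B \ D) by
    simpa only [Finset.sdiff_sdiff_eq_self hSB] using key (B \ S) sdiff_subset h
  intro D
  induction D using Finset.induction with
  | empty => intro _ _; simpa using hB.rk_insert hR1 e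
  | insert d D hdD ih =>
    intro hDB hD
    by_contra hne
    have hd : d ∈ B \ D := mem_sdiff.2 ⟨hDB (mem_insert_self d D), hdD⟩
    have hBD : insert d (B \ insert d D) = B \ D := by
      rw [sdiff_insert, insert_erase hd]
    refine hD d (mem_insert_self d D) (hB.isBasis_insert_erase_of_rk_insert hR0 hR1 hR2 hR3
      sdiff_subset (mem_sdiff.1 hd).1 (by simp) hne ?_)
    rw [hBD]
    exact ih ((subset_insert d D).trans hDB) fun b hb => hD b (mem_insert_of_mem hb)

include hR0 hR1 hR2 hR3 in
theorem exists_isBasis : ∃ B, IsBasis rk B := by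
  obtain ⟨B, hB, hmax⟩ :=
    exists_max_image {S : Finset α | rk S = S.card} card ⟨∅, by simp [hR0]⟩
  refine ⟨B, (mem_filter.1 hB).2, ?_⟩
  by_contra hne
  obtain ⟨f, -, hf⟩ := exists_rk_insert_ne_of_rk_lt hR1 hR2
    (lt_of_le_of_ne (hR1 _ _ (subset_univ B)) hne)
  have hfB : f ∉ B := fun h => hf (by rw [insert_eq_of_mem h])
  have hrk := rk_insert_eq_add_one_of_ne hR1 hR3 hf
  have := hmax (insert f B) (by simp [hrk, card_insert_of_notMem hfB, (mem_filter.1 hB).2])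
  rw [card_insert_of_notMem hfB] at this
  omega

include hR0 hR1 hR2 hR3 in
theorem exists_isBasis_forall_isBasis_insert_erase_weight_le (w : α → ℤ) :
    ∃ B, IsBasis rk B ∧
      ∀ b ∈ B, ∀ f ∉ B, IsBasis rk (insert f (B.erase b)) → w f ≤ w b := by
  classical
  obtain ⟨B₀, hB₀⟩ := exists_isBasis hR0 hR1 hR2 hR3
  obtain ⟨B, hB, hmax⟩ :=
    exists_max_image {B | IsBasis rk B} (fun B => ∑ x ∈ B, w x) ⟨B₀, by simpa using hB₀⟩
  refine ⟨B, (mem_filter.1 hB).2, fun b hb f hf hbasis => ?_⟩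
  have := hmax _ (mem_filter.2 ⟨mem_univ _, hbasis⟩)
  rw [sum_insert fun h => hf (mem_of_mem_erase h), ← add_sum_erase B w hb] at this
  linarith

end Basis

section Activity

variable {α : Type*} [Fintype α] [LinearOrder α] {rk : Finset α → ℕ}
  (hR0 : rk ∅ = 0)
  (hR1 : ∀ A B : Finset α, A ⊆ B → rk A ≤ rk B)
  (hR2 : ∀ A B : Finset α, rk (A ∪ B) + rk (A ∩ B) ≤ rk A + rk B)
  (hR3 : ∀ (A : Finset α) (e : α), rk (insert e A) ≤ rk A + 1)

theorem mem_intAct {B : Finset α} {e : α} :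
    e ∈ intAct rk B ↔ e ∈ B ∧ ∀ f < e, ¬ IsBasis rk (insert f (B.erase e)) := by
  simp only [intAct, mem_filter]

theorem mem_extAct {B : Finset α} {e : α} :
    e ∈ extAct rk B ↔ e ∉ B ∧ rk (insert e {b ∈ B | e < b}) = rk {b ∈ B | e < b} := by
  simp [extAct]

theorem intAct_subset (B : Finset α) : intAct rk B ⊆ B := fun _ he => (mem_intAct.1 he).1

include hR0 hR1 hR2 hR3 in
theorem IsBasis.not_isBasis_insert_erase_of_mem_extAct_of_mem_intAct {B : Finset α}
    (hB : IsBasis rk B) {e b : α} (he : e ∈ extAct rk B) (hb : b ∈ intAct rk B) :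
    ¬ IsBasis rk (insert e (B.erase b)) := by
  obtain ⟨heB, hspan⟩ := mem_extAct.1 he
  obtain ⟨hbB, hact⟩ := mem_intAct.1 hb
  rcases lt_or_gt_of_ne (ne_of_mem_of_not_mem hbB heB) with hbe | heb
  · rw [hB.isBasis_insert_erase_iff hR0 hR1 hR3 hbB, not_not]
    refine rk_insert_eq_of_subset hR1 hR2 hspan fun x hx => ?_
    obtain ⟨hxB, hex⟩ := mem_filter.1 hx
    exact mem_erase.2 ⟨(hbe.trans hex).ne', hxB⟩
  · exact hact e heb

include hR0 hR1 hR2 hR3 in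
theorem IsBasis.rk_insert_sdiff_eq_of_mem_extAct {B J : Finset α} (hB : IsBasis rk B) {e : α}
    (he : e ∈ extAct rk B) (hJ : J ⊆ intAct rk B) :
    rk (insert e (B \ J)) = rk (B \ J) :=
  hB.rk_insert_eq_of_forall_not_isBasis hR0 hR1 hR2 hR3 sdiff_subset fun b hb =>
    hB.not_isBasis_insert_erase_of_mem_extAct_of_mem_intAct hR0 hR1 hR2 hR3 he
      (hJ (by simp_all))

include hR0 hR1 hR2 hR3 in
theorem IsBasis.isMoleculeWith {B : Finset α} (hB : IsBasis rk B) :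
    IsMoleculeWith rk (B \ intAct rk B) (intAct rk B) (extAct rk B) := by
  have hI : intAct rk B ⊆ B := intAct_subset B
  have hEB : Disjoint B (extAct rk B) := disjoint_right.2 fun e he => (mem_extAct.1 he).1
  refine ⟨sdiff_disjoint, disjoint_of_subset_left sdiff_subset hEB,
    disjoint_of_subset_left hI hEB, fun A hRA hAT => ?_⟩
  rw [sdiff_union_of_subset hI] at hAT
  have hBA : B \ A ⊆ intAct rk B := fun x hx => by
    by_contra hxI
    exact (mem_sdiff.1 hx).2 (hRA (mem_sdiff.2 ⟨(mem_sdiff.1 hx).1, hxI⟩))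
  have hspan : ∀ f ∈ A \ B, rk (insert f (A ∩ B)) = rk (A ∩ B) := fun f hf => by
    have hfE := (mem_union.1 (hAT (mem_sdiff.1 hf).1)).resolve_left (mem_sdiff.1 hf).2
    simpa [sdiff_sdiff_self_left, inter_comm] using
      hB.rk_insert_sdiff_eq_of_mem_extAct hR0 hR1 hR2 hR3 hfE hBA
  have hA : rk A = (A ∩ B).card := calc
    rk A = rk (A ∩ B ∪ A \ B) := by rw [union_comm, sdiff_union_inter]
    _ = rk (A ∩ B) := rk_union_eq_of_forall_rk_insert_eq hR1 hR2 hspan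
    _ = (A ∩ B).card := rk_eq_card_of_subset hR0 hR3 hB.1 inter_subset_right
  have hR : rk (B \ intAct rk B) = (B \ intAct rk B).card :=
    rk_eq_card_of_subset hR0 hR3 hB.1 sdiff_subset
  have hsplit : A ∩ B = (B \ intAct rk B) ∪ (A ∩ intAct rk B) := by
    ext x
    have := @hI x
    have := @hRA x
    simp only [mem_inter, mem_union, mem_sdiff] at *
    tauto
  rw [hA, hR, hsplit, card_union_of_disjoint (disjoint_of_subset_right inter_subset_right
    sdiff_disjoint)]

include hR0 hR1 hR2 hR3 in
theorem exists_isBasis_sdiff_intAct_subset_subset_union_extAct (A : Finset α) :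
    ∃ B, IsBasis rk B ∧ B \ intAct rk B ⊆ A ∧ A ⊆ B ∪ extAct rk B := by
  set idx : α → ℕ := fun x => (Fintype.orderIsoFinOfCardEq α rfl).symm x
  have hidx : StrictMono idx := Fin.val_strictMono.comp (OrderIso.strictMono _)
  obtain ⟨B, hB, hw⟩ := exists_isBasis_forall_isBasis_insert_erase_weight_le hR0 hR1 hR2 hR3
    fun x => if x ∈ A then (idx x : ℤ) + 1 else -idx x
  refine ⟨B, hB, fun e he => ?_, fun e heA => ?_⟩
  · obtain ⟨heB, heI⟩ := mem_sdiff.1 he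
    by_contra heA
    refine heI (mem_intAct.2 ⟨heB, fun f hfe hbasis => ?_⟩)
    by_cases hfB : f ∈ B
    · refine (hB.isBasis_insert_erase_iff hR0 hR1 hR3 heB f).1 hbasis ?_
      rw [insert_eq_of_mem (mem_erase.2 ⟨hfe.ne, hfB⟩)]
    · have hlt := hidx hfe
      have := hw e heB f hfB hbasis
      split_ifs at this <;> omega
  · by_cases heB : e ∈ B
    · exact mem_union_left _ heB
    refine mem_union_right _ (mem_extAct.2 ⟨heB, hB.rk_insert_eq_of_forall_not_isBasis
      hR0 hR1 hR2 hR3 (filter_subset _ _) fun b hb hbasis => ?_⟩)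
    have hbe : b < e := by
      simp only [mem_sdiff, mem_filter, not_and, not_lt] at hb
      exact lt_of_le_of_ne (hb.2 hb.1) (ne_of_mem_of_not_mem hb.1 heB)
    have hlt := hidx hbe
    have := hw b (mem_sdiff.1 hb).1 e heB hbasis
    split_ifs at this <;> omega

include hR0 hR1 hR2 hR3 in
theorem IsBasis.exists_mem_symmDiff_gt {A B B' : Finset α} (hB : IsBasis rk B)
    (hB' : IsBasis rk B') (hBA : B \ intAct rk B ⊆ A) (hAB' : A ⊆ B' ∪ extAct rk B')
    {e : α} (heB : e ∈ B) (heB' : e ∉ B') : ∃ x ∈ symmDiff B B', e < x := by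
  by_contra! hmax
  have hpos : 0 < B.card := card_pos.2 ⟨e, heB⟩
  have herase := hB.rk_erase hR0 hR3 heB
  by_cases heA : e ∈ A
  · obtain ⟨-, hspan⟩ := mem_extAct.1 ((mem_union.1 (hAB' heA)).resolve_left heB')
    have hsub : {b ∈ B' | e < b} ⊆ B.erase e := fun x hx => by
      obtain ⟨hxB', hex⟩ := mem_filter.1 hx
      refine mem_erase.2 ⟨hex.ne', ?_⟩
      by_contra hxB
      exact (hmax x (mem_symmDiff.2 (Or.inr ⟨hxB', hxB⟩))).not_gt hex
    have := rk_insert_eq_of_subset hR1 hR2 hspan hsub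
    rw [insert_erase heB, hB.1] at this
    omega
  · have heI : e ∈ intAct rk B := by
      by_contra heI
      exact heA (hBA (mem_sdiff.2 ⟨heB, heI⟩))
    obtain ⟨f, hfB', hf⟩ := exists_rk_insert_ne_of_rk_lt hR1 hR2
      (show rk (B.erase e) < rk B' by rw [hB'.2, ← hB.2, hB.1]; omega)
    have hfB : f ∉ B := fun hfB => hf (by
      rw [insert_eq_of_mem (mem_erase.2 ⟨ne_of_mem_of_not_mem hfB' heB', hfB⟩)])
    have hfe : f < e := lt_of_le_of_ne (hmax f (mem_symmDiff.2 (Or.inr ⟨hfB', hfB⟩)))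
      (ne_of_mem_of_not_mem hfB' heB')
    exact (mem_intAct.1 heI).2 f hfe ((hB.isBasis_insert_erase_iff hR0 hR1 hR3 heB f).2 hf)

include hR0 hR1 hR2 hR3 in
theorem IsBasis.eq_of_sdiff_intAct_subset_subset_union_extAct {A B B' : Finset α}
    (hB : IsBasis rk B) (hB' : IsBasis rk B')
    (hBA : B \ intAct rk B ⊆ A) (hAB : A ⊆ B ∪ extAct rk B)
    (hB'A : B' \ intAct rk B' ⊆ A) (hAB' : A ⊆ B' ∪ extAct rk B') : B = B' := by
  by_contra hne
  have hsymm := symmDiff_nonempty.2 hne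
  have hmax : ∀ x ∈ symmDiff B B', x ≤ (symmDiff B B').max' hsymm :=
    fun x hx => le_max' _ x hx
  rcases mem_symmDiff.1 (max'_mem _ hsymm) with ⟨heB, heB'⟩ | ⟨heB', heB⟩
  · obtain ⟨x, hx, hlt⟩ := hB.exists_mem_symmDiff_gt hR0 hR1 hR2 hR3 hB' hBA hAB' heB heB'
    exact (hmax x hx).not_gt hlt
  · obtain ⟨x, hx, hlt⟩ := hB'.exists_mem_symmDiff_gt hR0 hR1 hR2 hR3 hB hB'A hAB heB' heB
    exact (hmax x (symmDiff_comm B' B ▸ hx)).not_gt hlt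

end Activity
/-- Crapo decomposition: the power set `2^E` is the disjoint union over
bases `B` of the intervals `[B∖I(B), B∪E(B)]` (every subset lies in exactly one such
interval), and each such interval is a molecule with independent part `F = I(B)` and
dependent part `T = E(B)`. -/
theorem crapo_decomposition {α : Type*} [Fintype α] [LinearOrder α]
    (rk : Finset α → ℕ)
    (hR0 : rk ∅ = 0)
    (hR1 : ∀ A B : Finset α, A ⊆ B → rk A ≤ rk B)
    (hR2 : ∀ A B : Finset α, rk (A ∪ B) + rk (A ∩ B) ≤ rk A + rk B)
    (hR3 : ∀ (A : Finset α) (e : α), rk (insert e A) ≤ rk A + 1) :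
    (∀ A : Finset α, ∃! B : Finset α, IsBasis rk B ∧
        B \ intAct rk B ⊆ A ∧ A ⊆ B ∪ extAct rk B) ∧
    (∀ B : Finset α, IsBasis rk B →
        B ∪ extAct rk B = (B \ intAct rk B) ∪ intAct rk B ∪ extAct rk B ∧
        IsMoleculeWith rk (B \ intAct rk B) (intAct rk B) (extAct rk B)) := by
  refine ⟨fun A => ?_, fun B hB => ⟨?_, hB.isMoleculeWith hR0 hR1 hR2 hR3⟩⟩
  · obtain ⟨B, hB, hBA, hAB⟩ :=
      exists_isBasis_sdiff_intAct_subset_subset_union_extAct hR0 hR1 hR2 hR3 A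
    exact ⟨B, ⟨hB, hBA, hAB⟩, fun B' ⟨hB', hB'A, hAB'⟩ =>
      (hB.eq_of_sdiff_intAct_subset_subset_union_extAct
        hR0 hR1 hR2 hR3 hB' hBA hAB hB'A hAB').symm⟩
  · rw [sdiff_union_of_subset (intAct_subset B)]
end

section
/- Let G be a finitely generated abelian group, A a finite list of elements of G, and e an element of G. Let G_A denote the torsion subgroup of the quotient of G by the subgroup generated by A. If e is not a torsion element of G/⟨A⟩, there is a group monomorphism from G_A into G_{A∪{e}}; if e is a torsion element of G/⟨A⟩, there is a group epimorphism from G_A onto G_{A∪{e}}. -/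
/-!
Passing from `G ⧸ ⟨A⟩` to `G ⧸ ⟨A ∪ {e}⟩` is the quotient by the cyclic subgroup generated by the
image `ē` of `e`, and the quotient map restricts to a homomorphism of torsion subgroups. Its
kernel on torsion is the torsion of `⟨ē⟩`, which vanishes when `ē` has infinite order. When `ē`
is torsion, so is all of `⟨ē⟩`, and a torsion class of `G ⧸ ⟨A ∪ {e}⟩` lifts to a class some
multiple of which lies in `⟨ē⟩`, hence to a torsion class.
-/

/-- The torsion subgroup of the quotient of `G` by the subgroup generated by the
finite set `s`. -/
def torsionQuot (G : Type*) [AddCommGroup G] (s : Set G) : Type _ :=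
  AddCommGroup.torsion (G ⧸ AddSubgroup.closure s)

noncomputable instance (G : Type*) [AddCommGroup G] (s : Set G) :
    AddCommGroup (torsionQuot G s) :=
  inferInstanceAs (AddCommGroup (AddCommGroup.torsion (G ⧸ AddSubgroup.closure s)))

open AddSubgroup QuotientAddGroup

namespace AddMonoidHom

variable {M N : Type*} [AddCommGroup M] [AddCommGroup N]

def torsionMap (f : M →+ N) : AddCommGroup.torsion M →+ AddCommGroup.torsion N :=
  (f.comp (AddCommGroup.torsion M).subtype).codRestrict _ fun x => f.isOfFinAddOrder x.2

theorem torsionMap_injective {f : M →+ N}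
    (hf : ∀ x ∈ f.ker, IsOfFinAddOrder x → x = 0) : Function.Injective f.torsionMap := by
  refine (injective_iff_map_eq_zero _).2 fun x hx => Subtype.ext ?_
  exact hf x (Subtype.ext_iff.1 hx) x.2

theorem torsionMap_surjective {f : M →+ N} (hf : Function.Surjective f)
    (hker : ∀ x ∈ f.ker, IsOfFinAddOrder x) : Function.Surjective f.torsionMap := by
  rintro ⟨y, hy⟩
  obtain ⟨x, rfl⟩ := hf y
  obtain ⟨n, hn, hnx⟩ := hy.exists_nsmul_eq_zero
  have hx : IsOfFinAddOrder x :=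
    (hker (n • x) (by rw [mem_ker, map_nsmul, hnx])).of_nsmul hn.ne'
  exact ⟨⟨x, hx⟩, rfl⟩

end AddMonoidHom

theorem eq_zero_of_mem_zmultiples_of_isOfFinAddOrder {M : Type*} [AddCommGroup M] {a y : M}
    (ha : ¬ IsOfFinAddOrder a)
    (hy : y ∈ zmultiples a) (hy_fin : IsOfFinAddOrder y) : y = 0 := by
  obtain ⟨k, rfl⟩ := mem_zmultiples_iff.1 hy
  obtain ⟨n, hn, hnk⟩ := isOfFinAddOrder_iff_zsmul_eq_zero.1 hy_fin
  by_contra hk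
  refine ha (isOfFinAddOrder_iff_zsmul_eq_zero.2 ⟨n * k, mul_ne_zero hn ?_, by rwa [mul_smul]⟩)
  rintro rfl
  exact hk (zero_smul ℤ a)

theorem ker_map_closure_insert {G : Type*} [AddCommGroup G] (s : Set G) (e : G)
    (h : closure s ≤ (closure (insert e s)).comap (AddMonoidHom.id G)) :
    (map (closure s) (closure (insert e s)) (AddMonoidHom.id G) h).ker =
      zmultiples (e : G ⧸ closure s) := by
  rw [ker_map, comap_id, Set.insert_eq, AddSubgroup.closure_union, AddSubgroup.map_sup,
    map_mk'_self, sup_bot_eq, ← zmultiples_eq_closure, AddMonoidHom.map_zmultiples, mk'_apply]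

theorem torsion_mono_or_epi_general (G : Type*) [AddCommGroup G]
    (s : Finset G) (e : G) :
    (¬ IsOfFinAddOrder
        ((QuotientAddGroup.mk e : G ⧸ AddSubgroup.closure (s : Set G))) →
      ∃ f : torsionQuot G (s : Set G) →+ torsionQuot G (insert e (s : Set G)),
        Function.Injective f) ∧
    (IsOfFinAddOrder
        ((QuotientAddGroup.mk e : G ⧸ AddSubgroup.closure (s : Set G))) →
      ∃ f : torsionQuot G (s : Set G) →+ torsionQuot G (insert e (s : Set G)),
        Function.Surjective f) := by
  have hle : closure (s : Set G) ≤ (closure (insert e (s : Set G))).comap (AddMonoidHom.id G) :=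
    closure_mono (Set.subset_insert e _)
  set π := map _ _ (AddMonoidHom.id G) hle
  have hker := ker_map_closure_insert (s : Set G) e hle
  refine ⟨fun he => ⟨π.torsionMap, AddMonoidHom.torsionMap_injective fun x hx => ?_⟩,
    fun he => ⟨π.torsionMap, AddMonoidHom.torsionMap_surjective ?_ fun x hx => ?_⟩⟩
  · exact eq_zero_of_mem_zmultiples_of_isOfFinAddOrder he (hker ▸ hx)
  · exact map_surjective_of_surjective _ _ _ mk_surjective hle
  · exact he.of_mem_zmultiples (hker ▸ hx)

/-- let `G` be a finitely generated abelian group, `A` a finite list of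
elements of `G` and `e ∈ G`; write `G_A` for the torsion subgroup of `G/⟨A⟩`.
If `e` is not a torsion element of `G/⟨A⟩` there is a monomorphism `G_A ↪ G_{A∪{e}}`;
if `e` is a torsion element of `G/⟨A⟩` there is an epimorphism `G_A ↠ G_{A∪{e}}`. -/
theorem torsion_mono_or_epi (G : Type*) [AddCommGroup G] [AddGroup.FG G]
    (s : Finset G) (e : G) :
    (¬ IsOfFinAddOrder
        ((QuotientAddGroup.mk e : G ⧸ AddSubgroup.closure (s : Set G))) →
      ∃ f : torsionQuot G (s : Set G) →+ torsionQuot G (insert e (s : Set G)),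
        Function.Injective f) ∧
    (IsOfFinAddOrder
        ((QuotientAddGroup.mk e : G ⧸ AddSubgroup.closure (s : Set G))) →
      ∃ f : torsionQuot G (s : Set G) →+ torsionQuot G (insert e (s : Set G)),
        Function.Surjective f) :=
  torsion_mono_or_epi_general G s e
end

section
/- For a representable arithmetic matroid given by a list of elements of a finitely generated abelian group G, and a molecule [R, R∪F∪T], there is a group isomorphism G_{R∪F}/G_R ≅ G_{R∪F∪T}/G_{R∪T}, where G_A denotes the torsion subgroup of G/⟨L_A⟩. In particular m(R)m(R∪F∪T) = m(R∪F)m(R∪T) where m(A) := |G_A|. -/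
set_option maxHeartbeats 1000000

variable {α : Type*} [DecidableEq α] {G : Type*} [AddCommGroup G]

/-- The subgroup `⟨L_A⟩` generated by the sublist of the list `g` indexed by `A`. -/
def listSub (g : α → G) (A : Finset α) : AddSubgroup G :=
  AddSubgroup.closure (g '' ↑A)

/-- The (free) rank `rk(A)` of `⟨L_A⟩`. -/
noncomputable def listRk (g : α → G) (A : Finset α) : ℕ :=
  Module.finrank ℤ (listSub g A)

/-- `G_A`: the torsion subgroup of `G/⟨L_A⟩`. -/
def listTorsion (g : α → G) (A : Finset α) : AddSubgroup (G ⧸ listSub g A) :=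
  AddCommGroup.torsion (G ⧸ listSub g A)

/-- The natural map `G_A → G_B` (restriction to torsion parts of the projection
`G/⟨L_A⟩ → G/⟨L_B⟩`), for `A ⊆ B`. -/
noncomputable def torsionQuotMap (g : α → G) (A B : Finset α) (h : A ⊆ B) :
    listTorsion g A →+ listTorsion g B :=
  let f : (G ⧸ listSub g A) →+ (G ⧸ listSub g B) :=
    QuotientAddGroup.map (listSub g A) (listSub g B) (AddMonoidHom.id G)
      (fun x hx => AddSubgroup.closure_mono
        (Set.image_mono (f := g) (Finset.coe_subset.mpr h)) hx)
  AddMonoidHom.codRestrict (f.comp (listTorsion g A).subtype) (listTorsion g B)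
    (fun x => f.isOfFinAddOrder x.2)

/-- The multiplicity `m(A) = |G_A|`. -/
noncomputable def listMult (g : α → G) (A : Finset α) : ℕ :=
  Nat.card (listTorsion g A)


/-!
Write `U = R ∪ F`, `W = R ∪ T`, `Z = R ∪ F ∪ T`. By the molecule condition `⟨L_W⟩/⟨L_R⟩` and
`⟨L_Z⟩/⟨L_U⟩` have rank zero, hence are torsion, so `G_R → G_W` and `G_U → G_Z` are onto; and
`⟨L_U⟩/⟨L_R⟩`, `⟨L_Z⟩/⟨L_W⟩` are generated by `|F|` elements and have rank `|F|`, hence are free,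
so `G_R → G_U` and `G_W → G_Z` are injective. The kernel of `G_U → G_Z/G_W` is the image of `G_R`:
if `v ≡ s (mod ⟨L_Z⟩)` with `s` torsion over `⟨L_R⟩`, write `v - s = u + w` with `u ∈ ⟨L_U⟩`,
`w ∈ ⟨L_W⟩`; then `v ≡ s + w (mod ⟨L_U⟩)` and `s + w` is torsion over `⟨L_R⟩`. Both claims follow,
the second by counting.
-/

open Module QuotientAddGroup

instance AddSubgroup.moduleFinite_int [AddGroup.FG G] (Q : AddSubgroup G) :
    Module.Finite ℤ Q := by
  have : Module.Finite ℤ G := Module.Finite.iff_addGroup_fg.mpr ‹_›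
  exact (inferInstance : Module.Finite ℤ Q.toIntSubmodule)

namespace AddSubgroup

theorem finrank_map_mk'_add_finrank {P Q : AddSubgroup G} (hPQ : P ≤ Q)
    [Module.Finite ℤ Q] : finrank ℤ (Q.map (mk' P)) + finrank ℤ P = finrank ℤ Q := by
  let φ : Q →+ G ⧸ P := (mk' P).comp Q.subtype
  have hker : φ.ker = P.addSubgroupOf Q := by
    rw [← AddMonoidHom.comap_ker, ker_mk']
    rfl
  have hrange : φ.range = Q.map (mk' P) := by
    rw [AddMonoidHom.range_comp, range_subtype]
  let e : Q ⧸ P.addSubgroupOf Q ≃+ Q.map (mk' P) :=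
    (quotientAddEquivOfEq hker.symm).trans
      ((quotientKerEquivRange φ).trans (AddEquiv.addSubgroupCongr hrange))
  rw [← e.toIntLinearEquiv.finrank_eq, ← (addSubgroupOfEquivOfLe hPQ).toIntLinearEquiv.finrank_eq]
  exact (P.addSubgroupOf Q).toIntSubmodule.finrank_quotient_add_finrank

theorem map_mk'_le_torsion_of_finrank_eq {P Q : AddSubgroup G} (hPQ : P ≤ Q) [Module.Finite ℤ Q]
    (h : finrank ℤ Q = finrank ℤ P) : Q.map (mk' P) ≤ AddCommGroup.torsion (G ⧸ P) := by
  have h₀ : finrank ℤ (Q.map (mk' P)) = 0 := by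
    have := finrank_map_mk'_add_finrank hPQ
    omega
  have : Module.Finite ℤ (Q.map (mk' P)) :=
    .of_surjective ((mk' P).addSubgroupMap Q).toIntLinearMap ((mk' P).addSubgroupMap_surjective Q)
  intro y hy
  obtain ⟨a, ha, hay⟩ := Module.finrank_eq_zero_iff.mp h₀ ⟨y, hy⟩
  exact isOfFinAddOrder_iff_zsmul_eq_zero.mpr ⟨a, ha, congrArg Subtype.val hay⟩

theorem disjoint_closure_torsion_of_card_eq_finrank {ι : Type*} [Fintype ι] (b : ι → G)
    (h : Fintype.card ι = finrank ℤ (closure (Set.range b))) :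
    Disjoint (closure (Set.range b)) (AddCommGroup.torsion G) := by
  rw [← Submodule.span_int_eq_addSubgroupClosure] at h ⊢
  -- a spanning family of `finrank` many vectors is a basis, since `ℤ` is noetherian
  have : Module.Free ℤ (Submodule.span ℤ (Set.range b)) :=
    .of_basis (Basis.span (linearIndependent_iff_card_eq_finrank_span.mpr h))
  have : IsAddTorsionFree (Submodule.span ℤ (Set.range b)) :=
    isTorsionFree_int_iff_isAddTorsionFree.mp inferInstance
  rw [disjoint_def]
  intro y hy hyt
  have hy₀ := (isOfFinAddOrder_iff_eq_zero (⟨y, hy⟩ : Submodule.span ℤ (Set.range b))).mp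
    (AddSubmonoid.isOfFinAddOrder_coe.mp hyt)
  exact congrArg Subtype.val hy₀

theorem disjoint_map_mk'_torsion_of_finrank_sup_eq {ι : Type*} [Fintype ι] (P : AddSubgroup G)
    (b : ι → G) [Module.Finite ℤ ↥(P ⊔ closure (Set.range b))]
    (h : finrank ℤ ↥(P ⊔ closure (Set.range b)) = finrank ℤ P + Fintype.card ι) :
    Disjoint ((P ⊔ closure (Set.range b)).map (mk' P)) (AddCommGroup.torsion (G ⧸ P)) := by
  have himage : (P ⊔ closure (Set.range b)).map (mk' P) = closure (Set.range (mk' P ∘ b)) := by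
    rw [map_sup, map_mk'_self, bot_sup_eq, AddMonoidHom.map_closure, Set.range_comp]
  have := finrank_map_mk'_add_finrank (le_sup_left : P ≤ P ⊔ closure (Set.range b))
  rw [himage] at this ⊢
  exact disjoint_closure_torsion_of_card_eq_finrank _ (by omega)

end AddSubgroup

namespace QuotientAddGroup

noncomputable def torsionMap {P Q : AddSubgroup G} (h : P ≤ Q) :
    AddCommGroup.torsion (G ⧸ P) →+ AddCommGroup.torsion (G ⧸ Q) :=
  let f : G ⧸ P →+ G ⧸ Q := map P Q (AddMonoidHom.id G) h
  AddMonoidHom.codRestrict (f.comp (AddCommGroup.torsion _).subtype) (AddCommGroup.torsion _)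
    (fun x => f.isOfFinAddOrder x.2)

theorem torsionMap_comp {P Q S : AddSubgroup G} (hPQ : P ≤ Q) (hQS : Q ≤ S) :
    (torsionMap hQS).comp (torsionMap hPQ) = torsionMap (hPQ.trans hQS) := by
  ext ⟨x, hx⟩
  obtain ⟨v, rfl⟩ := mk_surjective x
  rfl

theorem torsionMap_injective {P Q : AddSubgroup G} (hPQ : P ≤ Q)
    (h : Disjoint (Q.map (mk' P)) (AddCommGroup.torsion (G ⧸ P))) :
    Function.Injective (torsionMap hPQ) := by
  rw [injective_iff_map_eq_zero]
  rintro ⟨x, hx⟩ hx₀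
  obtain ⟨v, rfl⟩ := mk_surjective x
  have hv : v ∈ Q := (QuotientAddGroup.eq_zero_iff v).mp (congrArg Subtype.val hx₀)
  exact Subtype.ext (AddSubgroup.disjoint_def.mp h ⟨v, hv, rfl⟩ hx)

theorem torsionMap_surjective {P Q : AddSubgroup G} (hPQ : P ≤ Q)
    (h : Q.map (mk' P) ≤ AddCommGroup.torsion (G ⧸ P)) :
    Function.Surjective (torsionMap hPQ) := by
  rintro ⟨y, hy⟩
  obtain ⟨v, rfl⟩ := mk_surjective y
  obtain ⟨n, hn, hnv⟩ := isOfFinAddOrder_iff_nsmul_eq_zero.mp hy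
  have hnvQ : n • v ∈ Q := by
    rwa [← mk_nsmul, QuotientAddGroup.eq_zero_iff] at hnv
  have hv : IsOfFinAddOrder ((n • v : G) : G ⧸ P) := h ⟨_, hnvQ, rfl⟩
  rw [mk_nsmul] at hv
  exact ⟨⟨v, hv.of_nsmul hn.ne'⟩, rfl⟩

theorem comap_range_torsionMap {R U W Z : AddSubgroup G} (hRU : R ≤ U) (hRW : R ≤ W)
    (hUZ : U ≤ Z) (hWZ : W ≤ Z) (hZ : Z ≤ U ⊔ W)
    (hW : W.map (mk' R) ≤ AddCommGroup.torsion (G ⧸ R)) :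
    (torsionMap hWZ).range.comap (torsionMap hUZ) = (torsionMap hRU).range := by
  apply le_antisymm
  · rintro ⟨x, hx⟩ ⟨y, hxy⟩
    obtain ⟨⟨_, hs⟩, rfl⟩ := torsionMap_surjective hRW hW y
    obtain ⟨s, rfl⟩ := mk_surjective ‹G ⧸ R›
    obtain ⟨v, rfl⟩ := mk_surjective x
    have hsv : -s + v ∈ Z := QuotientAddGroup.eq.mp (congrArg Subtype.val hxy)
    obtain ⟨u, hu, w, hw, huw⟩ := AddSubgroup.mem_sup.mp (hZ hsv)
    have hsw : ((s + w : G) : G ⧸ R) ∈ AddCommGroup.torsion (G ⧸ R) :=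
      add_mem hs (hW ⟨w, hw, rfl⟩)
    have hswv : -(s + w) + v = u := by
      rw [eq_sub_of_add_eq huw]
      abel
    refine ⟨⟨_, hsw⟩, Subtype.ext (QuotientAddGroup.eq.mpr ?_)⟩
    show -(s + w) + v ∈ U
    rwa [hswv]
  · rintro _ ⟨x, rfl⟩
    refine ⟨torsionMap hRW x, ?_⟩
    rw [← AddMonoidHom.comp_apply, ← AddMonoidHom.comp_apply, torsionMap_comp, torsionMap_comp]

noncomputable def quotientEquivOfComapEq {A B : Type*} [AddCommGroup A] [AddCommGroup B]
    (φ : A →+ B) (hφ : Function.Surjective φ) {S : AddSubgroup A} {T : AddSubgroup B}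
    (h : T.comap φ = S) : A ⧸ S ≃+ B ⧸ T :=
  (quotientAddEquivOfEq (by rw [← AddMonoidHom.comap_ker, ker_mk', h])).trans
    (quotientKerEquivOfSurjective ((mk' T).comp φ) ((mk'_surjective T).comp hφ))

end QuotientAddGroup

theorem AddMonoidHom.card_eq_card_quotient_range_mul_card {A B : Type*} [AddGroup A]
    [AddGroup B] {f : A →+ B} (hf : Function.Injective f) :
    Nat.card B = Nat.card (B ⧸ f.range) * Nat.card A := by
  rw [AddSubgroup.card_eq_card_quotient_mul_card_addSubgroup f.range,
    Nat.card_congr (AddMonoidHom.ofInjective hf).toEquiv]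

omit [DecidableEq α] in
theorem listSub_mono (g : α → G) {A B : Finset α} (h : A ⊆ B) : listSub g A ≤ listSub g B :=
  AddSubgroup.closure_mono (Set.image_mono (Finset.coe_subset.mpr h))

theorem listSub_union (g : α → G) (A B : Finset α) :
    listSub g (A ∪ B) = listSub g A ⊔ listSub g B := by
  rw [listSub, listSub, listSub, Finset.coe_union, Set.image_union, AddSubgroup.closure_union]

omit [DecidableEq α] in
theorem torsionQuotMap_eq_torsionMap (g : α → G) {A B : Finset α} (h : A ⊆ B) :
    torsionQuotMap g A B h = torsionMap (listSub_mono g h) :=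
  rfl

theorem torsionQuotMap_injective_of_listRk_union [AddGroup.FG G] (g : α → G) {A B E : Finset α}
    (hAB : A ⊆ B) (hB : A ∪ E = B) (h : listRk g B = listRk g A + E.card) :
    Function.Injective (torsionQuotMap g A B hAB) := by
  subst hB
  have hE :
      listSub g (A ∪ E) = listSub g A ⊔ AddSubgroup.closure (Set.range fun e : E => g e) := by
    rw [listSub_union]
    congr 1
    rw [listSub, Set.image_eq_range]
    rfl
  rw [listRk, listRk, hE, ← Fintype.card_coe E] at h
  rw [torsionQuotMap_eq_torsionMap]
  apply torsionMap_injective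
  rw [hE]
  exact AddSubgroup.disjoint_map_mk'_torsion_of_finrank_sup_eq _ _ h

omit [DecidableEq α] in
theorem torsionQuotMap_surjective_of_listRk_eq [AddGroup.FG G] (g : α → G) {A B : Finset α}
    (hAB : A ⊆ B) (h : listRk g B = listRk g A) :
    Function.Surjective (torsionQuotMap g A B hAB) := by
  rw [torsionQuotMap_eq_torsionMap]
  exact torsionMap_surjective _
    (AddSubgroup.map_mk'_le_torsion_of_finrank_eq (listSub_mono g hAB) h)

theorem listRk_of_molecule (g : α → G) {R F T : Finset α} (hRF : Disjoint R F)
    (hFT : Disjoint F T)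
    (hmol : ∀ A : Finset α, R ⊆ A → A ⊆ R ∪ F ∪ T → listRk g A = listRk g R + (A ∩ F).card) :
    listRk g (R ∪ F) = listRk g R + F.card ∧ listRk g (R ∪ T) = listRk g R ∧
      listRk g (R ∪ F ∪ T) = listRk g R + F.card := by
  have hRU : R ⊆ R ∪ F := Finset.subset_union_left
  have hUZ : R ∪ F ⊆ R ∪ F ∪ T := Finset.subset_union_left
  refine ⟨by simpa using hmol (R ∪ F) hRU hUZ, ?_, ?_⟩
  · have h := hmol (R ∪ T) Finset.subset_union_left (Finset.union_subset_union hRU le_rfl)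
    rwa [Finset.disjoint_iff_inter_eq_empty.mp (Finset.disjoint_union_left.mpr ⟨hRF, hFT.symm⟩),
      Finset.card_empty, add_zero] at h
  · have h := hmol (R ∪ F ∪ T) (hRU.trans hUZ) le_rfl
    rwa [Finset.inter_eq_right.mpr (Finset.subset_union_right.trans hUZ)] at h

theorem molecule_torsion_quotient_iso_general [AddGroup.FG G]
    (g : α → G) (R F T : Finset α)
    (hRF : Disjoint R F) (hFT : Disjoint F T)
    (hmol : ∀ A : Finset α, R ⊆ A → A ⊆ R ∪ F ∪ T →
      listRk g A = listRk g R + (A ∩ F).card) :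
    Nonempty
      ((listTorsion g (R ∪ F) ⧸
          (torsionQuotMap g R (R ∪ F) Finset.subset_union_left).range) ≃+
       (listTorsion g (R ∪ F ∪ T) ⧸
          (torsionQuotMap g (R ∪ T) (R ∪ F ∪ T)
            (Finset.union_subset_union Finset.subset_union_left
              (Finset.Subset.refl T))).range)) ∧
    listMult g R * listMult g (R ∪ F ∪ T) = listMult g (R ∪ F) * listMult g (R ∪ T) := by
  have hRU : R ⊆ R ∪ F := Finset.subset_union_left
  have hUZ : R ∪ F ⊆ R ∪ F ∪ T := Finset.subset_union_left
  have hRW : R ⊆ R ∪ T := Finset.subset_union_left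
  have hWZ : R ∪ T ⊆ R ∪ F ∪ T := Finset.union_subset_union hRU (Finset.Subset.refl T)
  obtain ⟨hrk_U, hrk_W, hrk_Z⟩ := listRk_of_molecule g hRF hFT hmol
  have hinj_U : Function.Injective (torsionQuotMap g R (R ∪ F) hRU) :=
    torsionQuotMap_injective_of_listRk_union g hRU rfl hrk_U
  have hinj_Z : Function.Injective (torsionQuotMap g (R ∪ T) (R ∪ F ∪ T) hWZ) :=
    torsionQuotMap_injective_of_listRk_union g hWZ (Finset.union_right_comm R T F)
      (by rw [hrk_Z, hrk_W])
  have hsurj_Z : Function.Surjective (torsionQuotMap g (R ∪ F) (R ∪ F ∪ T) hUZ) :=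
    torsionQuotMap_surjective_of_listRk_eq g hUZ (hrk_Z.trans hrk_U.symm)
  have hZ : listSub g (R ∪ F ∪ T) ≤ listSub g (R ∪ F) ⊔ listSub g (R ∪ T) := by
    rw [listSub_union g (R ∪ F) T]
    exact sup_le_sup_left (listSub_mono g Finset.subset_union_right) _
  have hexact : (torsionQuotMap g (R ∪ T) (R ∪ F ∪ T) hWZ).range.comap
      (torsionQuotMap g (R ∪ F) (R ∪ F ∪ T) hUZ) = (torsionQuotMap g R (R ∪ F) hRU).range := by
    simp only [torsionQuotMap_eq_torsionMap]
    exact comap_range_torsionMap (listSub_mono g hRU) (listSub_mono g hRW) _ _ hZ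
      (AddSubgroup.map_mk'_le_torsion_of_finrank_eq (listSub_mono g hRW) hrk_W)
  let e := quotientEquivOfComapEq _ hsurj_Z hexact
  refine ⟨⟨e⟩, ?_⟩
  rw [listMult, listMult, listMult, listMult,
    AddMonoidHom.card_eq_card_quotient_range_mul_card hinj_U,
    AddMonoidHom.card_eq_card_quotient_range_mul_card hinj_Z, Nat.card_congr e.toEquiv]
  ring

/-- for a representable arithmetic matroid given by a list in a finitely
generated abelian group `G` and a molecule `[R, R∪F∪T]`, there is an isomorphism
`G_{R∪F}/G_R ≅ G_{R∪F∪T}/G_{R∪T}` (quotients by the images under the natural maps);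
in particular `m(R)·m(R∪F∪T) = m(R∪F)·m(R∪T)`. -/
theorem molecule_torsion_quotient_iso [Fintype α] [AddGroup.FG G]
    (g : α → G) (R F T : Finset α)
    (hRF : Disjoint R F) (hRT : Disjoint R T) (hFT : Disjoint F T)
    (hmol : ∀ A : Finset α, R ⊆ A → A ⊆ R ∪ F ∪ T →
      listRk g A = listRk g R + (A ∩ F).card) :
    Nonempty
      ((listTorsion g (R ∪ F) ⧸
          (torsionQuotMap g R (R ∪ F) Finset.subset_union_left).range) ≃+
       (listTorsion g (R ∪ F ∪ T) ⧸
          (torsionQuotMap g (R ∪ T) (R ∪ F ∪ T)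
            (Finset.union_subset_union Finset.subset_union_left
              (Finset.Subset.refl T))).range)) ∧
    listMult g R * listMult g (R ∪ F ∪ T) = listMult g (R ∪ F) * listMult g (R ∪ T) :=
  molecule_torsion_quotient_iso_general g R F T hRF hFT hmol
end
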